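/- arXiv:2003.09621 — 4 statements merged into one kernel-verified Lean document; each statement's English description precedes it below -/
import Mathlib

section
/- For any k ∈ [1, n-1], the set P^k_+ = {x ∈ R^n : s^+(x) ≤ k-1} equals the topological interior of P^k_- = {x ∈ R^n : s^-(x) ≤ k-1}. -/
/-!
Replacing the zeros of `x` by suitably signed entries of size `t > 0` gives vectors without zeros
that tend to `x` as `t → 0` and have `s⁻ = s⁺(x)`; hence every neighbourhood of `x` meets
`{s⁻ = s⁺(x)}`, so `interior P⁻ ⊆ P⁺`. Conversely, near `x` every nonzero entry keeps its sign, so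
`s⁺` can only drop, making `P⁺` open; and `s⁻ ≤ s⁺` since deleting nonzero entries from a list of
nonzero reals cannot create sign changes.
-/

/-- Number of sign changes in a list of reals: the number of adjacent pairs
with strictly opposite signs. -/
noncomputable def signChanges (l : List ℝ) : ℕ :=
  ((l.zip l.tail).filter (fun p => decide (p.1 * p.2 < 0))).length

/-- `s^-(x)`: sign changes after deleting all zero entries. -/
noncomputable def sMinus (n : ℕ) (x : Fin n → ℝ) : ℕ :=
  signChanges (((List.finRange n).map x).filter (fun a => decide (a ≠ 0)))

/-- `s^+(x)`: maximal number of sign changes over all ways of replacing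
each zero entry by `1` or `-1`. -/
noncomputable def sPlus (n : ℕ) (x : Fin n → ℝ) : ℕ :=
  Finset.univ.sup (fun ε : Fin n → Bool =>
    signChanges ((List.finRange n).map (fun i =>
      if x i = 0 then (if ε i then (1:ℝ) else -1) else x i)))

open Filter Topology Set

lemma signChanges_cons_cons (a b : ℝ) (l : List ℝ) :
    signChanges (a :: b :: l) = (if a * b < 0 then 1 else 0) + signChanges (b :: l) := by
  simp only [signChanges, List.zip, List.zipWith, List.tail, List.filter]
  split_ifs with h <;> simp [h, Nat.add_comm]

lemma signChanges_zero_cons (l : List ℝ) : signChanges (0 :: l) = signChanges l := by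
  cases l with
  | nil => rfl
  | cons b t => simp [signChanges_cons_cons]

lemma signChanges_cons_le_cons_cons (a : ℝ) {b : ℝ} (hb : b ≠ 0) (l : List ℝ) :
    signChanges (a :: l) ≤ signChanges (a :: b :: l) := by
  cases l with
  | nil => exact Nat.zero_le _
  | cons c t =>
    rw [signChanges_cons_cons a c, signChanges_cons_cons a b, signChanges_cons_cons b c]
    have hsplit : a * c < 0 → a * b < 0 ∨ b * c < 0 := fun hac => by
      by_contra! hnon
      nlinarith [mul_nonneg hnon.1 hnon.2, mul_neg_of_neg_of_pos hac (mul_self_pos.mpr hb)]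
    split_ifs <;> first | omega | (exfalso; tauto)

lemma signChanges_cons_le_of_sublist {l₁ l₂ : List ℝ} (h : l₁.Sublist l₂)
    (hl : ∀ x ∈ l₂, x ≠ 0) (a : ℝ) : signChanges (a :: l₁) ≤ signChanges (a :: l₂) := by
  induction h generalizing a with
  | slnil => exact le_rfl
  | @cons l₁ l₂ b _ ih =>
    exact (ih (fun x hx => hl x (List.mem_cons_of_mem _ hx)) a).trans
      (signChanges_cons_le_cons_cons a (hl b List.mem_cons_self) l₂)
  | @cons_cons l₁ l₂ b _ ih =>
    rw [signChanges_cons_cons, signChanges_cons_cons]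
    exact Nat.add_le_add_left (ih (fun x hx => hl x (List.mem_cons_of_mem _ hx)) b) _

lemma signChanges_le_of_sublist {l₁ l₂ : List ℝ} (h : l₁.Sublist l₂) (hl : ∀ x ∈ l₂, x ≠ 0) :
    signChanges l₁ ≤ signChanges l₂ := by
  simpa only [signChanges_zero_cons] using signChanges_cons_le_of_sublist h hl 0

lemma signChanges_eq_of_forall₂ {l₁ l₂ : List ℝ}
    (h : List.Forall₂ (fun a b => 0 < a * b) l₁ l₂) : signChanges l₁ = signChanges l₂ := by
  induction h with
  | nil => rfl
  | @cons a b t₁ t₂ hab h ih =>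
    cases h with
    | nil => rfl
    | @cons a' b' _ _ hab' _ =>
      rw [signChanges_cons_cons, signChanges_cons_cons, ih]
      have : a * a' < 0 ↔ b * b' < 0 := by
        constructor <;> intro hh <;> nlinarith [mul_pos hab hab']
      simp only [this]

lemma signChanges_map_eq {α : Type*} {f g : α → ℝ} {l : List α} (h : ∀ a ∈ l, 0 < f a * g a) :
    signChanges (l.map f) = signChanges (l.map g) :=
  signChanges_eq_of_forall₂ <| List.forall₂_map_left_iff.mpr <|
    List.forall₂_map_right_iff.mpr <| List.forall₂_same.mpr h

section Vectors

variable {n : ℕ}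

noncomputable def fillZeros (x : Fin n → ℝ) (ε : Fin n → Bool) : Fin n → ℝ :=
  fun i => if x i = 0 then (if ε i then 1 else -1) else x i

lemma sPlus_eq_sup (x : Fin n → ℝ) :
    sPlus n x = Finset.univ.sup fun ε => signChanges ((List.finRange n).map (fillZeros x ε)) :=
  rfl

lemma signChanges_fillZeros_le_sPlus (x : Fin n → ℝ) (ε : Fin n → Bool) :
    signChanges ((List.finRange n).map (fillZeros x ε)) ≤ sPlus n x :=
  Finset.le_sup (f := fun ε => signChanges ((List.finRange n).map (fillZeros x ε)))
    (Finset.mem_univ ε)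

lemma fillZeros_ne_zero (x : Fin n → ℝ) (ε : Fin n → Bool) (i : Fin n) : fillZeros x ε i ≠ 0 := by
  unfold fillZeros
  split_ifs <;> norm_num [*]

lemma fillZeros_of_ne_zero {x : Fin n → ℝ} (ε : Fin n → Bool) {i : Fin n} (hi : x i ≠ 0) :
    fillZeros x ε i = x i :=
  if_neg hi

lemma sMinus_le_sPlus (x : Fin n → ℝ) : sMinus n x ≤ sPlus n x := by
  let ε : Fin n → Bool := fun _ => true
  have hsub : (((List.finRange n).map x).filter fun a => decide (a ≠ 0)).Sublist
      ((List.finRange n).map (fillZeros x ε)) := by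
    rw [List.filter_map, List.map_congr_left (g := fillZeros x ε) fun i hi =>
      (fillZeros_of_ne_zero ε (by simpa using List.of_mem_filter hi)).symm]
    exact List.filter_sublist.map _
  refine (signChanges_le_of_sublist hsub ?_).trans (signChanges_fillZeros_le_sPlus x ε)
  simp only [List.mem_map]
  rintro _ ⟨i, -, rfl⟩
  exact fillZeros_ne_zero x ε i

lemma sMinus_eq_of_forall_ne_zero {x : Fin n → ℝ} (hx : ∀ i, x i ≠ 0) :
    sMinus n x = signChanges ((List.finRange n).map x) := by
  rw [sMinus, List.filter_eq_self.mpr]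
  simp only [List.mem_map]
  rintro _ ⟨i, -, rfl⟩
  simpa using hx i

lemma sPlus_le_of_pos_mul {x y : Fin n → ℝ} (h : ∀ i, x i ≠ 0 → 0 < x i * y i) :
    sPlus n y ≤ sPlus n x := by
  refine Finset.sup_le fun ε _ => ?_
  -- `ε'` follows the signs of `y`, so `fillZeros x ε'` has the signs of `fillZeros y ε`.
  let ε' : Fin n → Bool := fun i => if y i = 0 then ε i else decide (0 < y i)
  refine le_of_eq_of_le (signChanges_map_eq fun i _ => ?_) (signChanges_fillZeros_le_sPlus x ε')
  by_cases hx : x i = 0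
  · by_cases hy : y i = 0
    · cases hε : ε i <;> simp [fillZeros, ε', hx, hy, hε]
    · rcases lt_or_gt_of_ne hy with hneg | hpos
      · simp [fillZeros, ε', hx, hy, hneg, hneg.not_gt]
      · simp [fillZeros, ε', hx, hy, hpos]
  · have hxy := h i hx
    have hy : y i ≠ 0 := by rintro hy; simp [hy] at hxy
    simp only [fillZeros, if_neg hx, if_neg hy]
    linarith [mul_comm (x i) (y i)]

lemma eventually_sPlus_le (x : Fin n → ℝ) : ∀ᶠ y in 𝓝 x, sPlus n y ≤ sPlus n x := by
  have hsign : ∀ᶠ y in 𝓝 x, ∀ i, x i ≠ 0 → 0 < x i * y i := by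
    refine eventually_all.mpr fun i => ?_
    by_cases hi : x i = 0
    · exact Eventually.of_forall fun _ h => absurd hi h
    · have hcont : Continuous fun y : Fin n → ℝ => x i * y i := by fun_prop
      exact (continuousAt_const.eventually_lt hcont.continuousAt (mul_self_pos.mpr hi)).mono
        fun y hy _ => hy
  exact hsign.mono fun y hy => sPlus_le_of_pos_mul hy

lemma isOpen_setOf_sPlus_le (m : ℕ) : IsOpen {x : Fin n → ℝ | sPlus n x ≤ m} :=
  isOpen_iff_mem_nhds.mpr fun x hx => (eventually_sPlus_le x).mono fun _ hy => hy.trans hx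

lemma frequently_sMinus_eq_sPlus (x : Fin n → ℝ) : ∃ᶠ y in 𝓝 x, sMinus n y = sPlus n x := by
  obtain ⟨ε, -, hε⟩ := Finset.exists_mem_eq_sup Finset.univ Finset.univ_nonempty
    fun ε => signChanges ((List.finRange n).map (fillZeros x ε))
  let e := fillZeros x ε - x
  have hpath : Tendsto (fun t : ℝ => x + t • e) (𝓝[>] 0) (𝓝 x) := by
    have : Continuous fun t : ℝ => x + t • e := by fun_prop
    simpa using (this.tendsto 0).mono_left nhdsWithin_le_nhds
  refine hpath.frequently (Eventually.frequently ?_)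
  filter_upwards [self_mem_nhdsWithin] with t (ht : 0 < t)
  have hpos : ∀ i, 0 < (x + t • e) i * fillZeros x ε i := by
    intro i
    by_cases hx : x i = 0
    · cases hε : ε i <;> simp [e, fillZeros, hx, hε, ht]
    · simp [e, fillZeros_of_ne_zero ε hx, mul_self_pos.mpr hx]
  rw [sMinus_eq_of_forall_ne_zero fun i h => by simpa [h] using hpos i, sPlus_eq_sup, hε]
  exact signChanges_map_eq fun i _ => hpos i

theorem setOf_sPlus_le_eq_interior (m : ℕ) :
    {x : Fin n → ℝ | sPlus n x ≤ m} = interior {x : Fin n → ℝ | sMinus n x ≤ m} := by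
  refine Subset.antisymm
    (interior_maximal (fun x hx => (sMinus_le_sPlus x).trans hx) (isOpen_setOf_sPlus_le m))
    fun x hx => ?_
  obtain ⟨y, hy, hyx⟩ := (Eventually.and_frequently (mem_interior_iff_mem_nhds.mp hx)
    (frequently_sMinus_eq_sPlus x)).exists
  exact hyx.ge.trans hy

end Vectors

theorem stmt2_general (n k : ℕ) :
    {x : Fin n → ℝ | sPlus n x ≤ k - 1} =
      interior {x : Fin n → ℝ | sMinus n x ≤ k - 1} :=
  setOf_sPlus_le_eq_interior (k - 1)

theorem stmt2 (n k : ℕ) (hk1 : 1 ≤ k) (hk2 : k ≤ n - 1) :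
    {x : Fin n → ℝ | sPlus n x ≤ k - 1} =
      interior {x : Fin n → ℝ | sMinus n x ≤ k - 1} :=
  stmt2_general n k
end

section
/- Let G be a finite connected signed directed graph on n ≥ 4 vertices without self-loops such that every vertex has at most two neighbors, G is sign-symmetric, and G has exactly r ∈ {1,2} negative edges with all negative edges incident to a common pair of vertices {u, w} where u ≠ w. Then there exists a bijective labeling of the vertices by {1,...,n} with label(u) = 1 and label(w) = n such that every edge either connects consecutively labeled vertices with a + sign, or connects vertices labeled 1 and n with a - sign. -/
/-- A signed directed graph on `Fin n`: `g u v = some true` means a `+` edge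
from `u` to `v`, `g u v = some false` means a `-` edge from `u` to `v`, and
`g u v = none` means no edge. -/
def IsNeighbor {n : ℕ} (g : Fin n → Fin n → Option Bool) (u v : Fin n) : Prop :=
  u ≠ v ∧ (g u v ≠ none ∨ g v u ≠ none)

/-- The underlying (undirected, unsigned) graph of a signed directed graph. -/
def underGraph {n : ℕ} (g : Fin n → Fin n → Option Bool) : SimpleGraph (Fin n) :=
  SimpleGraph.fromRel (fun u v => g u v ≠ none)

instance {n : ℕ} (g : Fin n → Fin n → Option Bool) (u v : Fin n) :
    Decidable (IsNeighbor g u v) := by unfold IsNeighbor; infer_instance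

/-!
Deleting the edge `{u, w}` from the underlying graph leaves a graph `H` of maximum degree two in
which `u` and `w` have degree at most one, and every vertex is connected in `H` to `u` or to `w`.
A longest path of `H` starting at a vertex of degree at most one has no chords and cannot be left
along an edge, so it exhausts the component of its start. Either `w` lies on the path from `u`,
which then visits every vertex and ends at `w`, or the paths from `u` and from `w` are disjoint
and together cover all vertices; then the path from `u` followed by the reversed path from `w`
lists every vertex. Numbering the vertices along this list, every edge other than `{u, w}` joins
consecutive numbers and is positive, while the edges between `u` and `w` are negative by
sign-symmetry.
-/

lemma List.pair_infix_iff {α : Type*} {L : List α} {a b : α} :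
    [a, b] <:+: L ↔ ∃ i, ∃ h : i + 1 < L.length, L[i] = a ∧ L[i + 1] = b := by
  constructor
  · rintro ⟨s, t, rfl⟩
    exact ⟨s.length, by simp, by simp, by simp⟩
  · rintro ⟨i, h, rfl, rfl⟩
    refine ⟨L.take i, L.drop (i + 2), ?_⟩
    conv_rhs => rw [← List.take_append_drop i L, List.drop_eq_getElem_cons (by omega),
      List.drop_eq_getElem_cons h]
    simp

lemma List.Nodup.getEquivOfForallMemList_symm_getElem {α : Type*} [DecidableEq α] {L : List α}
    (hnd : L.Nodup) (h : ∀ x, x ∈ L) (i : ℕ) (hi : i < L.length) :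
    ((List.Nodup.getEquivOfForallMemList L hnd h).symm L[i] : ℕ) = i := by
  rw [(Equiv.symm_apply_eq (y := ⟨i, hi⟩) _).2 (by simp)]

namespace SimpleGraph

variable {V : Type*} {G : SimpleGraph V}

lemma Reachable.mem_of_adj_closed {S : Set V} (hS : ∀ a b, G.Adj a b → a ∈ S → b ∈ S)
    {x y : V} (h : G.Reachable x y) (hx : x ∈ S) : y ∈ S := by
  obtain ⟨p⟩ := h
  induction p with
  | nil => exact hx
  | cons hab _ ih => exact ih (hS _ _ hab hx)

lemma Connected.reachable_deleteEdges_or (hG : G.Connected) (u w x : V) :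
    (G.deleteEdges {s(u, w)}).Reachable u x ∨ (G.deleteEdges {s(u, w)}).Reachable w x := by
  refine (hG.preconnected u x).mem_of_adj_closed (S := {x | _ ∨ _}) ?_ (Or.inl .rfl)
  intro a b hab ha
  by_cases he : s(a, b) = s(u, w)
  · rcases Sym2.eq_iff.1 he with ⟨-, rfl⟩ | ⟨-, rfl⟩
    exacts [Or.inr .rfl, Or.inl .rfl]
  · have hab' : (G.deleteEdges {s(u, w)}).Adj a b := by simpa [he] using hab
    exact ha.imp (·.trans hab'.reachable) (·.trans hab'.reachable)

section Degree

variable [Fintype V] [DecidableRel G.Adj] {v x y z : V}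

lemma eq_of_adj_of_degree_le_one (h : G.degree v ≤ 1) (hx : G.Adj v x) (hy : G.Adj v y) :
    x = y :=
  Finset.card_le_one.mp h x ((G.mem_neighborFinset v x).2 hx) y ((G.mem_neighborFinset v y).2 hy)

lemma eq_or_eq_or_eq_of_degree_le_two (h : G.degree v ≤ 2) (hx : G.Adj v x) (hy : G.Adj v y)
    (hz : G.Adj v z) : x = y ∨ x = z ∨ y = z := by
  by_contra! hne
  refine h.not_gt (Finset.two_lt_card_iff.2 ⟨x, y, z, ?_, ?_, ?_, hne⟩) <;>
    simpa [mem_neighborFinset]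

lemma degree_deleteEdges_lt {S : Set (Sym2 V)} [DecidableRel (G.deleteEdges S).Adj]
    (h : G.Adj v x) (hS : s(v, x) ∈ S) : (G.deleteEdges S).degree v < G.degree v := by
  refine Finset.card_lt_card ((Finset.ssubset_iff_of_subset fun y hy => ?_).2 ⟨x, ?_, ?_⟩)
  · simp only [mem_neighborFinset, deleteEdges_adj] at hy ⊢
    exact hy.1
  · simpa [mem_neighborFinset]
  · simp [mem_neighborFinset, hS]

end Degree

structure IsPathList (G : SimpleGraph V) (s : V) (L : List V) : Prop where
  nodup : L.Nodup
  isChain : L.IsChain G.Adj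
  head?_eq : L.head? = some s

namespace IsPathList

variable {s : V} {L : List V}

lemma start_mem (hL : G.IsPathList s L) : s ∈ L :=
  List.mem_of_mem_head? hL.head?_eq

lemma getElem_zero (hL : G.IsPathList s L) (h : 0 < L.length) : L[0] = s := by
  simpa [List.head?_eq_getElem?, List.getElem?_eq_getElem h] using hL.head?_eq

lemma reachable (hL : G.IsPathList s L) {x : V} (hx : x ∈ L) : G.Reachable s x := by
  obtain ⟨i, hi, rfl⟩ := List.getElem_of_mem hx
  clear hx
  induction i with
  | zero => rw [hL.getElem_zero hi]
  | succ i ih => exact (ih (by omega)).trans (hL.isChain.getElem i hi).reachable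

lemma append_singleton (hL : G.IsPathList s L) (hne : L ≠ []) {x : V} (hx : x ∉ L)
    (hadj : G.Adj (L.getLast hne) x) : G.IsPathList s (L ++ [x]) where
  nodup := List.nodup_append.2 ⟨hL.nodup, List.nodup_singleton x, by grind⟩
  isChain := List.isChain_append.2 ⟨hL.isChain, List.isChain_singleton x, by
    simp [List.getLast?_eq_some_getLast hne, hadj]⟩
  head?_eq := by simp [List.head?_append, hL.head?_eq]

variable [Fintype V]

lemma exists_forall_length_le (G : SimpleGraph V) (s : V) :
    ∃ L, G.IsPathList s L ∧ ∀ L', G.IsPathList s L' → L'.length ≤ L.length := by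
  have hfin : {L : List V | L.Nodup}.Finite :=
    @Set.toFinite _ _ (Finite.of_fintype {L : List V // L.Nodup})
  obtain ⟨L, hL, hmax⟩ := Set.exists_max_image {L | G.IsPathList s L} List.length
    (hfin.subset fun L hL => hL.nodup) ⟨[s], List.nodup_singleton s, List.isChain_singleton s, rfl⟩
  exact ⟨L, hL, hmax⟩

variable [DecidableRel G.Adj]

lemma getLast?_eq_of_degree_le_one (hL : G.IsPathList s L) {t : V} (ht : t ∈ L) (hts : t ≠ s)
    (htdeg : G.degree t ≤ 1) : L.getLast? = some t := by
  obtain ⟨j, hj, rfl⟩ := List.getElem_of_mem ht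
  rcases j with _ | k
  · exact absurd (hL.getElem_zero hj) hts
  · have hlast : k + 2 = L.length := by
      by_contra
      have := hL.nodup.getElem_inj_iff.1 (eq_of_adj_of_degree_le_one htdeg
        (hL.isChain.getElem k hj).symm (hL.isChain.getElem (k + 1) (by omega)))
      omega
    simp [List.getLast?_eq_getElem?, ← hlast]

variable (hs : G.degree s ≤ 1) (hdeg : ∀ v, G.degree v ≤ 2)
include hs hdeg

/-- A chord `L[i] ~ L[j]` with `i + 1 < j` would give `s = L[0]` a second neighbour, or
`L[i]` a third one. -/
lemma succ_eq_or_succ_eq_of_adj (hL : G.IsPathList s L) {i j : ℕ} (hi : i < L.length)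
    (hj : j < L.length) (h : G.Adj L[i] L[j]) : i + 1 = j ∨ j + 1 = i := by
  wlog hij : i < j generalizing i j
  · have hne : i ≠ j := by rintro rfl; exact h.ne rfl
    exact (this hj hi h.symm (by omega)).symm
  by_contra! hfar
  rcases i with _ | k
  · have hs1 := hL.isChain.getElem 0 (by omega)
    rw [hL.getElem_zero hi] at h hs1
    have := hL.nodup.getElem_inj_iff.1 (eq_of_adj_of_degree_le_one hs hs1 h)
    omega
  · rcases eq_or_eq_or_eq_of_degree_le_two (hdeg _) (hL.isChain.getElem k hi).symm
      (hL.isChain.getElem (k + 1) (by omega)) h with h' | h' | h' <;>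
    · have := hL.nodup.getElem_inj_iff.1 h'
      omega

lemma infix_of_adj (hL : G.IsPathList s L) {a b : V} (ha : a ∈ L) (hb : b ∈ L)
    (hab : G.Adj a b) : [a, b] <:+: L ∨ [b, a] <:+: L := by
  obtain ⟨i, hi, rfl⟩ := List.getElem_of_mem ha
  obtain ⟨j, hj, rfl⟩ := List.getElem_of_mem hb
  rcases hL.succ_eq_or_succ_eq_of_adj hs hdeg hi hj hab with rfl | rfl
  · exact Or.inl (List.pair_infix_iff.2 ⟨i, hj, rfl, rfl⟩)
  · exact Or.inr (List.pair_infix_iff.2 ⟨j, hi, rfl, rfl⟩)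

lemma mem_of_adj (hL : G.IsPathList s L) (hmax : ∀ L', G.IsPathList s L' → L'.length ≤ L.length)
    {a b : V} (ha : a ∈ L) (hab : G.Adj a b) : b ∈ L := by
  by_contra hb
  obtain ⟨i, hi, rfl⟩ := List.getElem_of_mem ha
  by_cases hlast : i + 1 < L.length
  · have hnext := hL.isChain.getElem i hlast
    rcases i with _ | k
    · rw [hL.getElem_zero hi] at hab hnext
      exact hb (eq_of_adj_of_degree_le_one hs hnext hab ▸ List.getElem_mem _)
    · rcases eq_or_eq_or_eq_of_degree_le_two (hdeg _) (hL.isChain.getElem k hi).symm hnext hab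
        with h | h | h
      · have := hL.nodup.getElem_inj_iff.1 h
        omega
      · exact hb (h ▸ List.getElem_mem _)
      · exact hb (h ▸ List.getElem_mem _)
  · have hne : L ≠ [] := List.ne_nil_of_length_pos (by omega)
    have := hmax _ (hL.append_singleton hne hb (by
      simpa only [List.getLast_eq_getElem, show L.length - 1 = i by omega]))
    simp at this

end IsPathList

variable [Fintype V] [DecidableRel G.Adj]

theorem exists_spanning_list_of_degree_le_two {u w : V} (huw : u ≠ w)
    (hdeg : ∀ v, G.degree v ≤ 2) (hu : G.degree u ≤ 1) (hw : G.degree w ≤ 1)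
    (hreach : ∀ x, G.Reachable u x ∨ G.Reachable w x) :
    ∃ L : List V, L.Nodup ∧ (∀ x, x ∈ L) ∧ L.head? = some u ∧ L.getLast? = some w ∧
      ∀ a b, G.Adj a b → [a, b] <:+: L ∨ [b, a] <:+: L := by
  obtain ⟨Lu, hLu, hmaxu⟩ := IsPathList.exists_forall_length_le G u
  obtain ⟨Lw, hLw, hmaxw⟩ := IsPathList.exists_forall_length_le G w
  have closed_u : ∀ a b, G.Adj a b → a ∈ Lu → b ∈ Lu :=
    fun _ _ hab ha => hLu.mem_of_adj hu hdeg hmaxu ha hab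
  have closed_w : ∀ a b, G.Adj a b → a ∈ Lw → b ∈ Lw :=
    fun _ _ hab ha => hLw.mem_of_adj hw hdeg hmaxw ha hab
  have hcover : ∀ x, x ∈ Lu ∨ x ∈ Lw := fun x => (hreach x).imp
    (·.mem_of_adj_closed closed_u hLu.start_mem) (·.mem_of_adj_closed closed_w hLw.start_mem)
  by_cases hwu : w ∈ Lu
  · have hall : ∀ x, x ∈ Lu := fun x => (hcover x).elim id
      fun hx => (hLw.reachable hx).mem_of_adj_closed closed_u hwu
    exact ⟨Lu, hLu.nodup, hall, hLu.head?_eq, hLu.getLast?_eq_of_degree_le_one hwu huw.symm hw,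
      fun a b hab => hLu.infix_of_adj hu hdeg (hall a) (hall b) hab⟩
  · have hdisj : ∀ x ∈ Lu, x ∉ Lw := fun x hxu hxw =>
      hwu ((hLw.reachable hxw).symm.mem_of_adj_closed closed_u hxu)
    refine ⟨Lu ++ Lw.reverse, ?_, fun x => by simpa using hcover x, ?_, ?_, fun a b hab => ?_⟩
    · refine List.nodup_append.2 ⟨hLu.nodup, List.nodup_reverse.2 hLw.nodup, ?_⟩
      rintro a ha _ hb rfl
      exact hdisj a ha (List.mem_reverse.1 hb)
    · simp [List.head?_append, hLu.head?_eq]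
    · simp [List.getLast?_append, hLw.head?_eq]
    · rcases hcover a with ha | ha
      · exact (hLu.infix_of_adj hu hdeg ha (closed_u a b hab ha) hab).imp
          (·.trans (List.prefix_append _ _).isInfix) (·.trans (List.prefix_append _ _).isInfix)
      · exact (hLw.infix_of_adj hw hdeg ha (closed_w a b hab ha) hab).symm.imp
          (fun h => (List.reverse_infix.2 h : [a, b] <:+: _).trans (List.suffix_append _ _).isInfix)
          (fun h => (List.reverse_infix.2 h : [b, a] <:+: _).trans (List.suffix_append _ _).isInfix)

theorem exists_equiv_fin_of_degree_le_two [DecidableEq V] {u w : V} (huw : u ≠ w)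
    (hdeg : ∀ v, G.degree v ≤ 2) (hu : G.degree u ≤ 1) (hw : G.degree w ≤ 1)
    (hreach : ∀ x, G.Reachable u x ∨ G.Reachable w x) :
    ∃ ℓ : V ≃ Fin (Fintype.card V), (ℓ u : ℕ) = 0 ∧ (ℓ w : ℕ) = Fintype.card V - 1 ∧
      ∀ a b, G.Adj a b → (ℓ a : ℕ) + 1 = ℓ b ∨ (ℓ b : ℕ) + 1 = ℓ a := by
  obtain ⟨L, hnd, hall, hLu, hLw, hinfix⟩ :=
    exists_spanning_list_of_degree_le_two huw hdeg hu hw hreach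
  have hlen : L.length = Fintype.card V := by
    simpa using Fintype.card_congr (List.Nodup.getEquivOfForallMemList L hnd hall)
  set ℓ := (List.Nodup.getEquivOfForallMemList L hnd hall).symm.trans (finCongr hlen)
  have hℓ : ∀ i (hi : i < L.length), (ℓ L[i] : ℕ) = i := fun i hi => by
    simpa [ℓ] using hnd.getEquivOfForallMemList_symm_getElem hall i hi
  have hℓ_infix : ∀ a b, [a, b] <:+: L → (ℓ a : ℕ) + 1 = ℓ b := by
    intro a b hab
    obtain ⟨i, hi, rfl, rfl⟩ := List.pair_infix_iff.1 hab
    rw [hℓ, hℓ]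
  obtain ⟨h0, rfl⟩ : ∃ h : 0 < L.length, L[0] = u := by
    simpa [List.head?_eq_getElem?, List.getElem?_eq_some_iff] using hLu
  obtain ⟨hlast, rfl⟩ : ∃ h : L.length - 1 < L.length, L[L.length - 1] = w := by
    simpa [List.getLast?_eq_getElem?, List.getElem?_eq_some_iff] using hLw
  exact ⟨ℓ, hℓ 0 h0, by rw [hℓ _ hlast, hlen],
    fun a b hab => (hinfix a b hab).imp (hℓ_infix a b) (hℓ_infix b a)⟩

end SimpleGraph

section SignedGraph

variable {n : ℕ} {g : Fin n → Fin n → Option Bool} {u w : Fin n}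

lemma degree_underGraph_le_two [DecidableRel (underGraph g).Adj]
    (hdeg : ∀ v : Fin n, (Finset.univ.filter (fun u => IsNeighbor g v u)).card ≤ 2) (v : Fin n) :
    (underGraph g).degree v ≤ 2 := by
  rw [← SimpleGraph.card_neighborFinset_eq_degree, SimpleGraph.neighborFinset_eq_filter]
  convert hdeg v
  exact Iff.rfl

lemma neg_edge_of_card_pos
    (hinc : ∀ a b, g a b = some false → (a = u ∧ b = w) ∨ (a = w ∧ b = u))
    (hpos : 0 < (Finset.univ.filter (fun p : Fin n × Fin n => g p.1 p.2 = some false)).card) :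
    g u w = some false ∨ g w u = some false := by
  obtain ⟨⟨a, b⟩, hab⟩ := Finset.card_pos.1 hpos
  have hab : g a b = some false := (Finset.mem_filter.1 hab).2
  rcases hinc a b hab with ⟨rfl, rfl⟩ | ⟨rfl, rfl⟩
  exacts [Or.inl hab, Or.inr hab]

lemma eq_some_false_of_sym2_eq (hss : ∀ u v, ¬ (g u v = some true ∧ g v u = some false))
    (hneg : g u w = some false ∨ g w u = some false) {a b : Fin n} (hab : g a b ≠ none)
    (h : s(a, b) = s(u, w)) : g a b = some false := by
  rcases Sym2.eq_iff.1 h with ⟨rfl, rfl⟩ | ⟨rfl, rfl⟩ <;>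
  · obtain ⟨_ | _, hc⟩ := Option.ne_none_iff_exists'.1 hab
    · exact hc
    · grind

lemma eq_some_true_of_sym2_ne
    (hinc : ∀ a b, g a b = some false → (a = u ∧ b = w) ∨ (a = w ∧ b = u)) {a b : Fin n}
    (hab : g a b ≠ none) (h : s(a, b) ≠ s(u, w)) : g a b = some true := by
  obtain ⟨_ | _, hc⟩ := Option.ne_none_iff_exists'.1 hab
  · exact absurd (Sym2.eq_iff.2 (hinc a b hc)) h
  · exact hc

end SignedGraph

open SimpleGraph in
theorem stmt8_general (n : ℕ) (g : Fin n → Fin n → Option Bool)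
    (hloop : ∀ u, g u u = none)
    (hconn : (underGraph g).Connected)
    (hdeg : ∀ v : Fin n, (Finset.univ.filter (fun u => IsNeighbor g v u)).card ≤ 2)
    (hss : ∀ u v, ¬ (g u v = some true ∧ g v u = some false))
    (r : ℕ) (hr : r = 1 ∨ r = 2)
    (u w : Fin n) (huw : u ≠ w)
    -- exactly `r` negative edges, all incident to the pair `{u, w}`
    (hneg : (Finset.univ.filter
        (fun p : Fin n × Fin n => g p.1 p.2 = some false)).card = r)
    (hinc : ∀ a b : Fin n, g a b = some false → (a = u ∧ b = w) ∨ (a = w ∧ b = u)) :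
    ∃ ℓ : Fin n ≃ Fin n, (ℓ u : ℕ) = 0 ∧ (ℓ w : ℕ) = n - 1 ∧
      ∀ a b : Fin n, g a b ≠ none →
        (((ℓ a : ℕ) + 1 = (ℓ b : ℕ) ∨ (ℓ b : ℕ) + 1 = (ℓ a : ℕ)) ∧ g a b = some true) ∨
        ((((ℓ a : ℕ) = 0 ∧ (ℓ b : ℕ) = n - 1) ∨ ((ℓ b : ℕ) = 0 ∧ (ℓ a : ℕ) = n - 1)) ∧
          g a b = some false) := by
  classical
  have hGdeg := degree_underGraph_le_two hdeg
  have hneg_uw := neg_edge_of_card_pos hinc (by omega)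
  have hGuw : (underGraph g).Adj u w := ⟨huw, by rcases hneg_uw with h | h <;> simp [h]⟩
  have hHu := degree_deleteEdges_lt (S := {s(u, w)}) hGuw rfl
  have hHw := degree_deleteEdges_lt (S := {s(u, w)}) hGuw.symm Sym2.eq_swap
  obtain ⟨ℓ, hℓu, hℓw, hℓ⟩ := exists_equiv_fin_of_degree_le_two huw
    (fun v => (degree_le_of_le (deleteEdges_le _)).trans (hGdeg v))
    (by have := hGdeg u; omega) (by have := hGdeg w; omega) (hconn.reachable_deleteEdges_or u w)
  refine ⟨ℓ.trans (finCongr (Fintype.card_fin n)), by simpa using hℓu, by simpa using hℓw,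
    fun a b hab => ?_⟩
  by_cases he : s(a, b) = s(u, w)
  · refine Or.inr ⟨?_, eq_some_false_of_sym2_eq hss hneg_uw hab he⟩
    rcases Sym2.eq_iff.1 he with ⟨rfl, rfl⟩ | ⟨rfl, rfl⟩ <;> simp_all
  · have hGab : (underGraph g).Adj a b := ⟨fun h => hab (h ▸ hloop a), Or.inl hab⟩
    have hHab := (deleteEdges_adj (s := {s(u, w)})).2 ⟨hGab, he⟩
    exact Or.inl ⟨by simpa using hℓ a b hHab, eq_some_true_of_sym2_ne hinc hab he⟩

theorem stmt8 (n : ℕ) (hn : 4 ≤ n) (g : Fin n → Fin n → Option Bool)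
    (hloop : ∀ u, g u u = none)
    (hconn : (underGraph g).Connected)
    (hdeg : ∀ v : Fin n, (Finset.univ.filter (fun u => IsNeighbor g v u)).card ≤ 2)
    (hss : ∀ u v, ¬ (g u v = some true ∧ g v u = some false))
    (r : ℕ) (hr : r = 1 ∨ r = 2)
    (u w : Fin n) (huw : u ≠ w)
    -- exactly `r` negative edges, all incident to the pair `{u, w}`
    (hneg : (Finset.univ.filter
        (fun p : Fin n × Fin n => g p.1 p.2 = some false)).card = r)
    (hinc : ∀ a b : Fin n, g a b = some false → (a = u ∧ b = w) ∨ (a = w ∧ b = u)) :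
    ∃ ℓ : Fin n ≃ Fin n, (ℓ u : ℕ) = 0 ∧ (ℓ w : ℕ) = n - 1 ∧
      ∀ a b : Fin n, g a b ≠ none →
        (((ℓ a : ℕ) + 1 = (ℓ b : ℕ) ∨ (ℓ b : ℕ) + 1 = (ℓ a : ℕ)) ∧ g a b = some true) ∨
        ((((ℓ a : ℕ) = 0 ∧ (ℓ b : ℕ) = n - 1) ∨ ((ℓ b : ℕ) = 0 ∧ (ℓ a : ℕ) = n - 1)) ∧
          g a b = some false) :=
  stmt8_general n g hloop hconn hdeg hss r hr u w huw hneg hinc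
end

section
/- Let A ∈ R^{n×n} be sign-symmetric (a_{ij}a_{ji} ≥ 0 for all i ≠ j), with influence graph connected, every vertex having at most two neighbors, and ζ(A) even (where ζ counts edges {i,j} with a negative entry). Then there exists a signature matrix S such that all off-diagonal entries of SAS are non-negative, i.e., SAS is Metzler off the diagonal. -/
/-- The influence graph of a real matrix: an (undirected) edge `{i,j}`, `i ≠ j`,
whenever `A i j ≠ 0` or `A j i ≠ 0`. -/
def infGraph {n : ℕ} (A : Fin n → Fin n → ℝ) : SimpleGraph (Fin n) :=
  SimpleGraph.fromRel (fun i j => A i j ≠ 0 ∨ A j i ≠ 0)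

open Classical in
/-- `ζ(A)`: the number of unordered pairs `{i,j}`, `i ≠ j`, such that
`A i j < 0` or `A j i < 0` (the number of negative edges). -/
noncomputable def zeta {n : ℕ} (A : Fin n → Fin n → ℝ) : ℕ :=
  (Finset.univ.filter (fun p : Fin n × Fin n =>
    p.1 < p.2 ∧ (A p.1 p.2 < 0 ∨ A p.2 p.1 < 0))).card

open Classical in
/-- The number of neighbors of vertex `i` in the influence graph. -/
noncomputable def numNeighbors {n : ℕ} (A : Fin n → Fin n → ℝ) (i : Fin n) : ℕ :=
  (Finset.univ.filter (fun j : Fin n => j ≠ i ∧ (A i j ≠ 0 ∨ A j i ≠ 0))).card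

/-!
Give each edge `{i, j}` of the influence graph the sign `-1` if it is negative and `+1`
otherwise; the sought signature `s` must satisfy `s i * s j = sign {i, j}` on every edge.
Choose `s` minimising the number of frustrated edges, those where this fails. If a frustrated
edge `{u, v}` joined two different components of the graph of unfrustrated edges, flipping `s`
on the component of `u` would repair it without breaking any other edge. So the unfrustrated
edges form a connected spanning graph, and there are at least `n - 1` of them, while degrees
at most `2` allow at most `n` edges: at most one edge is frustrated. If one were, all degrees
would be `2`, so `∏ s i * s j = ∏ (s i) ^ 2 = 1` over the edges; since the product of the signs
is `(-1) ^ ζ(A) = 1`, the number of frustrated edges is even, hence zero.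
-/

open Finset

lemma ite_neg_mul_ite_neg {M : Type*} [Mul M] [HasDistribNeg M] (p q : Prop) [Decidable p]
    [Decidable q] (a b : M) :
    (if p then -a else a) * (if q then -b else b) = if (p ↔ q) then a * b else -(a * b) := by
  by_cases hp : p <;> by_cases hq : q <;> simp [hp, hq]

namespace SimpleGraph

variable {V M : Type*}

def edgeProd [CommMonoid M] (d : V → M) : Sym2 V → M :=
  Sym2.lift ⟨fun u v => d u * d v, fun _ _ => mul_comm _ _⟩

@[simp]
lemma edgeProd_mk [CommMonoid M] (d : V → M) (u v : V) : edgeProd d s(u, v) = d u * d v := rfl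

lemma Reachable.of_forall_adj_reachable {G H : SimpleGraph V}
    (h : ∀ x y, G.Adj x y → H.Reachable x y) {u v : V} (huv : G.Reachable u v) :
    H.Reachable u v := by
  rw [reachable_iff_reflTransGen] at huv ⊢
  exact huv.lift' id fun x y hxy => (reachable_iff_reflTransGen x y).mp (h x y hxy)

variable [Fintype V]

lemma card_edgeFinset_eq_card_filter_lt [LinearOrder V] (G : SimpleGraph V) [DecidableRel G.Adj] :
    #G.edgeFinset = #{p : V × V | p.1 < p.2 ∧ G.Adj p.1 p.2} := by
  symm
  refine card_bij (fun p _ => s(p.1, p.2)) (fun p hp => by simpa using (mem_filter.mp hp).2.2)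
    (fun p hp q hq h => ?_) (fun e he => ?_)
  · simp only [mem_filter, mem_univ, true_and] at hp hq
    rcases Sym2.eq_iff.mp h with ⟨h1, h2⟩ | ⟨h1, h2⟩
    · exact Prod.ext h1 h2
    · exact absurd (hp.1.trans (h2 ▸ h1 ▸ hq.1)) (lt_irrefl _)
  · induction e using Sym2.ind with
    | _ x y =>
    have hxy : G.Adj x y := by simpa using he
    rcases hxy.ne.lt_or_gt with h | h
    · exact ⟨(x, y), by simp [h, hxy], rfl⟩
    · exact ⟨(y, x), by simp [h, hxy.symm], Sym2.eq_swap⟩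

variable {G : SimpleGraph V} [DecidableRel G.Adj]

lemma prod_edgeFinset_edgeProd [CommMonoid M] (d : V → M) :
    ∏ e ∈ G.edgeFinset, edgeProd d e = ∏ v, d v ^ G.degree v := by
  classical
  have hfst : ∏ x : G.Dart, d x.fst = ∏ v, d v ^ G.degree v := by
    rw [← prod_fiberwise_of_maps_to (g := fun x : G.Dart => x.fst) (t := univ)
      (fun _ _ => mem_univ _)]
    refine prod_congr rfl fun v _ => ?_
    rw [← dart_fst_fiber_card_eq_degree, ← prod_const]
    exact prod_congr rfl fun x hx => by rw [(mem_filter.mp hx).2]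
  rw [← hfst, ← prod_fiberwise_of_maps_to (g := Dart.edge) (t := G.edgeFinset)
    (fun x _ => mem_edgeFinset.mpr x.edge_mem)]
  refine prod_congr rfl fun e he => ?_
  induction e using Sym2.ind with
  | _ u v =>
    let x : G.Dart := ⟨(u, v), mem_edgeFinset.mp he⟩
    rw [show s(u, v) = x.edge from rfl, Dart.edge_fiber, prod_pair x.symm_ne.symm]
    rfl

lemma card_edgeFinset_le_card (hdeg : ∀ v, G.degree v ≤ 2) :
    #G.edgeFinset ≤ Fintype.card V := by
  have : ∑ v, G.degree v ≤ ∑ _v : V, 2 := sum_le_sum fun v _ => hdeg v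
  rw [sum_degrees_eq_twice_card_edges, sum_const, card_univ, smul_eq_mul] at this
  omega

lemma degree_eq_two_of_card_le (hdeg : ∀ v, G.degree v ≤ 2)
    (hcard : Fintype.card V ≤ #G.edgeFinset) (v : V) : G.degree v = 2 := by
  have hsum : ∑ v, G.degree v = ∑ _v : V, 2 := by
    refine le_antisymm (sum_le_sum fun v _ => hdeg v) ?_
    rw [sum_degrees_eq_twice_card_edges, sum_const, card_univ, smul_eq_mul]
    omega
  exact (sum_eq_sum_iff_of_le fun v _ => hdeg v).mp hsum v (mem_univ v)

lemma card_add_card_le_of_connected_deleteEdges [DecidableEq V] {F : Finset (Sym2 V)}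
    (hFE : F ⊆ G.edgeFinset) (hconn : (G.deleteEdges ↑F).Connected) :
    Fintype.card V + #F ≤ #G.edgeFinset + 1 := by
  have := hconn.card_vert_le_card_edgeSet_add_one
  rw [edgeSet_deleteEdges, ← coe_edgeFinset, ← coe_sdiff, Nat.card_coe_set_eq,
    Set.ncard_coe_finset, card_sdiff_of_subset hFE, Nat.card_eq_fintype_card] at this
  have := card_le_card hFE
  omega

variable (G) in
def frustratedEdges (σ : Sym2 V → ℤˣ) (d : V → ℤˣ) : Finset (Sym2 V) :=
  G.edgeFinset.filter fun e => edgeProd d e ≠ σ e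

lemma frustratedEdges_subset (σ : Sym2 V → ℤˣ) (d : V → ℤˣ) :
    G.frustratedEdges σ d ⊆ G.edgeFinset :=
  filter_subset _ _

lemma mem_frustratedEdges {σ : Sym2 V → ℤˣ} {d : V → ℤˣ} {u v : V} :
    s(u, v) ∈ G.frustratedEdges σ d ↔ G.Adj u v ∧ d u * d v ≠ σ s(u, v) := by
  simp [frustratedEdges]

lemma neg_one_pow_card_frustratedEdges (σ : Sym2 V → ℤˣ) (d : V → ℤˣ) :
    (-1) ^ #(G.frustratedEdges σ d) =
      (∏ e ∈ G.edgeFinset, edgeProd d e) * ∏ e ∈ G.edgeFinset, σ e := by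
  have key : ∀ a b : ℤˣ, a * b = if a ≠ b then -1 else 1 := by
    intro a b
    rcases Int.units_eq_one_or a with rfl | rfl <;> rcases Int.units_eq_one_or b with rfl | rfl <;>
      decide
  rw [← prod_mul_distrib, prod_congr rfl fun e _ => key _ _, prod_ite, prod_const, prod_const_one,
    mul_one]
  rfl

lemma frustratedEdges_flip_subset [DecidableEq V] {σ : Sym2 V → ℤˣ} {d : V → ℤˣ} {u v : V}
    {R : V → Prop} [DecidablePred R]
    (hR : ∀ x y, G.Adj x y → s(x, y) ∉ G.frustratedEdges σ d → (R x ↔ R y)) (hu : R u)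
    (hv : ¬ R v) :
    G.frustratedEdges σ (fun w => if R w then -d w else d w) ⊆
      (G.frustratedEdges σ d).erase s(u, v) := by
  intro e he
  induction e using Sym2.ind with
  | _ x y =>
  rw [mem_frustratedEdges, ite_neg_mul_ite_neg] at he
  obtain ⟨hxy, hne⟩ := he
  by_cases hcut : R x ↔ R y
  · rw [if_pos hcut] at hne
    refine mem_erase.mpr ⟨?_, mem_frustratedEdges.mpr ⟨hxy, hne⟩⟩
    rintro h
    rcases Sym2.eq_iff.mp h with ⟨rfl, rfl⟩ | ⟨rfl, rfl⟩ <;> tauto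
  · have hfr : s(x, y) ∈ G.frustratedEdges σ d := by_contra fun h => hcut (hR x y hxy h)
    rw [if_neg hcut, ne_eq, neg_eq_iff_eq_neg] at hne
    exact absurd (Int.units_ne_iff_eq_neg.mp (mem_frustratedEdges.mp hfr).2) hne

theorem Connected.exists_mul_eq_of_degree_le_two [DecidableEq V] (hconn : G.Connected)
    (hdeg : ∀ v, G.degree v ≤ 2) (σ : Sym2 V → ℤˣ) (hσ : ∏ e ∈ G.edgeFinset, σ e = 1) :
    ∃ d : V → ℤˣ, ∀ u v, G.Adj u v → d u * d v = σ s(u, v) := by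
  obtain ⟨d, -, hmin⟩ := exists_min_image univ (fun d => #(G.frustratedEdges σ d)) univ_nonempty
  set F := G.frustratedEdges σ d
  set H := G.deleteEdges ↑F
  have hreach : ∀ u v, s(u, v) ∈ F → H.Reachable u v := by
    intro u v huv
    by_contra hnot
    have hR : ∀ x y, G.Adj x y → s(x, y) ∉ F → (H.Reachable u x ↔ H.Reachable u y) :=
      fun x y hxy hxyF => ⟨fun h => h.trans (deleteEdges_adj.mpr ⟨hxy, hxyF⟩).reachable,
        fun h => h.trans (deleteEdges_adj.mpr ⟨hxy.symm, by rwa [Sym2.eq_swap]⟩).reachable⟩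
    have hsub := frustratedEdges_flip_subset hR (Reachable.refl u) hnot
    exact (hmin _ (mem_univ _)).not_gt ((card_le_card hsub).trans_lt (card_erase_lt_of_mem huv))
  have hHconn : H.Connected := by
    have := hconn.nonempty
    refine ⟨fun u v => Reachable.of_forall_adj_reachable (fun x y hxy => ?_) (hconn u v)⟩
    by_cases hxyF : s(x, y) ∈ F
    · exact hreach x y hxyF
    · exact (deleteEdges_adj.mpr ⟨hxy, hxyF⟩).reachable
  have hcard : Fintype.card V + #F ≤ #G.edgeFinset + 1 :=
    card_add_card_le_of_connected_deleteEdges (frustratedEdges_subset σ d) hHconn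
  have hF : F = ∅ := by
    by_contra hne
    have hE := card_edgeFinset_le_card hdeg
    have hpos := card_pos.mpr (nonempty_iff_ne_empty.mpr hne)
    have hdeg_two := degree_eq_two_of_card_le hdeg (by omega)
    obtain ⟨k, hk⟩ : Even #F := by
      have := neg_one_pow_card_frustratedEdges (G := G) σ d
      rw [prod_edgeFinset_edgeProd, hσ] at this
      simp only [hdeg_two, Int.units_sq, prod_const_one, mul_one] at this
      exact (neg_one_pow_eq_one_iff_even (by decide)).mp this
    omega
  refine ⟨d, fun u v huv => by_contra fun h => ?_⟩
  have : s(u, v) ∈ F := mem_frustratedEdges.mpr ⟨huv, h⟩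
  simp [hF] at this

end SimpleGraph

section Matrix

variable {n : ℕ} (A : Fin n → Fin n → ℝ)

open Classical

def negGraph : SimpleGraph (Fin n) :=
  SimpleGraph.fromRel fun i j => A i j < 0

noncomputable def edgeSign (e : Sym2 (Fin n)) : ℤˣ :=
  if e ∈ (negGraph A).edgeSet then -1 else 1

lemma negGraph_le_infGraph : negGraph A ≤ infGraph A := by
  intro i j h
  simp only [negGraph, infGraph, SimpleGraph.fromRel_adj] at h ⊢
  exact ⟨h.1, h.2.imp (fun h => Or.inl h.ne) (fun h => Or.inl h.ne)⟩

lemma infGraph_degree (i : Fin n) : (infGraph A).degree i = numNeighbors A i := by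
  rw [← SimpleGraph.card_neighborFinset_eq_degree, numNeighbors]
  congr 1
  ext j
  rw [SimpleGraph.mem_neighborFinset, infGraph, SimpleGraph.fromRel_adj, mem_filter,
    and_iff_right (mem_univ j)]
  constructor <;> rintro ⟨hne, hA⟩ <;> exact ⟨hne.symm, by tauto⟩

lemma zeta_eq_card_edgeFinset_negGraph : zeta A = #(negGraph A).edgeFinset := by
  rw [SimpleGraph.card_edgeFinset_eq_card_filter_lt, zeta]
  congr 1
  ext p
  simp only [negGraph, SimpleGraph.fromRel_adj, mem_filter, mem_univ, true_and]
  exact ⟨fun h => ⟨h.1, h.1.ne, h.2⟩, fun h => ⟨h.1, h.2.2⟩⟩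

lemma prod_edgeSign : ∏ e ∈ (infGraph A).edgeFinset, edgeSign A e = (-1) ^ zeta A := by
  rw [zeta_eq_card_edgeFinset_negGraph]
  simp only [edgeSign]
  rw [prod_ite, prod_const, prod_const_one, mul_one]
  congr 2
  ext e
  simp only [mem_filter, SimpleGraph.mem_edgeFinset, and_iff_right_of_imp
    fun h => SimpleGraph.edgeSet_mono (negGraph_le_infGraph A) h]

lemma nonneg_of_mul_eq_edgeSign (hss : ∀ i j : Fin n, i ≠ j → 0 ≤ A i j * A j i)
    {s : Fin n → ℤˣ} (hs : ∀ i j, (infGraph A).Adj i j → s i * s j = edgeSign A s(i, j))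
    {i j : Fin n} (hij : i ≠ j) : 0 ≤ ((s i : ℤ) : ℝ) * (s j : ℤ) * A i j := by
  by_cases hadj : (infGraph A).Adj i j
  · have hsij : ((s i : ℤ) : ℝ) * (s j : ℤ) = ((edgeSign A s(i, j) : ℤ) : ℝ) := by
      rw [← hs i j hadj]; push_cast; rfl
    rw [hsij, edgeSign]
    by_cases hneg : A i j < 0 ∨ A j i < 0
    · have hle : A i j ≤ 0 := by
        rcases hneg with h | h
        · exact h.le
        · nlinarith [hss i j hij]
      rw [if_pos (by simpa [negGraph] using ⟨hij, hneg⟩)]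
      simpa using hle
    · rw [if_neg (by simpa [negGraph] using fun _ => hneg)]
      simpa using (not_lt.mp fun h => hneg (Or.inl h))
  · have : A i j = 0 := by
      by_contra h
      exact hadj (by simpa [infGraph] using ⟨hij, Or.inl (Or.inl h)⟩)
    simp [this]

end Matrix

/-- If `A` is sign-symmetric with connected influence graph, every vertex has
at most two neighbors, and `ζ(A)` is even, then there is a signature matrix `S`
such that `SAS` has all off-diagonal entries non-negative. -/
theorem stmt15 (n : ℕ) (A : Fin n → Fin n → ℝ)
    (hss : ∀ i j : Fin n, i ≠ j → 0 ≤ A i j * A j i)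
    (hconn : (infGraph A).Connected)
    (hdeg : ∀ i, numNeighbors A i ≤ 2)
    (hz : Even (zeta A)) :
    ∃ d : Fin n → ℝ, (∀ i, d i = 1 ∨ d i = -1) ∧
      ∀ i j : Fin n, i ≠ j → 0 ≤ d i * d j * A i j := by
  classical
  obtain ⟨s, hs⟩ := hconn.exists_mul_eq_of_degree_le_two
    (fun i => (infGraph_degree A i).trans_le (hdeg i)) (edgeSign A)
    ((prod_edgeSign A).trans hz.neg_one_pow)
  refine ⟨fun i => (s i : ℤ), fun i => ?_, fun i j hij => nonneg_of_mul_eq_edgeSign A hss hs hij⟩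
  rcases Int.units_eq_one_or (s i) with h | h <;> simp [h]
end

section
/- Let A ∈ R^{n×n} be sign-symmetric with connected influence graph, every vertex having at most two neighbors, and ζ(A) odd. Then there exists a signature matrix S such that SAS has exactly one negative edge in its influence graph (i.e., ζ(SAS) = 1), and all other edges of SAS are positive. -/
namespace Stmt16

open Finset

variable {n : ℕ}

open Classical in
noncomputable def negset (A : Fin n → Fin n → ℝ) : Finset (Fin n × Fin n) :=
  (Finset.univ.filter (fun p : Fin n × Fin n =>
    p.1 < p.2 ∧ (A p.1 p.2 < 0 ∨ A p.2 p.1 < 0)))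

lemma zeta_eq (A : Fin n → Fin n → ℝ) : zeta A = (negset A).card := rfl

lemma mem_negset {A : Fin n → Fin n → ℝ} {p : Fin n × Fin n} :
    p ∈ negset A ↔ p.1 < p.2 ∧ (A p.1 p.2 < 0 ∨ A p.2 p.1 < 0) := by
  classical
  simp [negset]

lemma adj_iff {A : Fin n → Fin n → ℝ} {i j : Fin n} :
    (infGraph A).Adj i j ↔ i ≠ j ∧ (A i j ≠ 0 ∨ A j i ≠ 0) := by
  simp only [infGraph, SimpleGraph.fromRel_adj]
  tauto

/-- the switching sign function attached to a set `U`. -/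
noncomputable def sg (U : Finset (Fin n)) (i : Fin n) : ℝ := if i ∈ U then -1 else 1

lemma sg_pm (U : Finset (Fin n)) (i : Fin n) : sg U i = 1 ∨ sg U i = -1 := by
  unfold sg; split <;> simp

lemma sg_same {U : Finset (Fin n)} {i j : Fin n} (h : i ∈ U ↔ j ∈ U) :
    sg U i * sg U j = 1 := by
  unfold sg
  by_cases hi : i ∈ U
  · simp [hi, h.mp hi]
  · have hj : j ∉ U := fun hj => hi (h.mpr hj)
    simp [hi, hj]

lemma sg_diff {U : Finset (Fin n)} {i j : Fin n} (h : ¬ (i ∈ U ↔ j ∈ U)) :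
    sg U i * sg U j = -1 := by
  unfold sg
  by_cases hi : i ∈ U <;> by_cases hj : j ∈ U <;>
    simp [hi, hj] at h ⊢ <;> tauto

/-- The central switching lemma: if every edge cut by `U` belongs to `K`,
and every element of `K` is a negative edge cut by `U`, then switching by `U`
removes exactly `K` from the set of negative edges. -/
lemma negset_switch (A : Fin n → Fin n → ℝ)
    (hss : ∀ i j : Fin n, i ≠ j → 0 ≤ A i j * A j i)
    (U : Finset (Fin n)) (K : Finset (Fin n × Fin n))
    (hK : ∀ p ∈ K, (p ∈ negset A) ∧ ¬ (p.1 ∈ U ↔ p.2 ∈ U))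
    (hcut : ∀ i j : Fin n, i < j → (A i j ≠ 0 ∨ A j i ≠ 0) →
      (i ∈ U ↔ j ∈ U) ∨ (i, j) ∈ K) :
    negset (fun i j => sg U i * sg U j * A i j) = negset A \ K := by
  ext ⟨i, j⟩
  rw [Finset.mem_sdiff, mem_negset, mem_negset]
  by_cases hij : i < j
  · simp only [hij, true_and]
    by_cases hU : i ∈ U ↔ j ∈ U
    · have h1 : sg U i * sg U j = 1 := sg_same hU
      have h2 : sg U j * sg U i = 1 := by rw [mul_comm]; exact h1
      rw [h1, h2, one_mul, one_mul]
      constructor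
      · intro hneg
        exact ⟨hneg, fun hk => (hK _ hk).2 hU⟩
      · exact fun h => h.1
    · have h1 : sg U i * sg U j = -1 := sg_diff hU
      have h2 : sg U j * sg U i = -1 := by rw [mul_comm]; exact h1
      rw [h1, h2]
      have hne : i ≠ j := ne_of_lt hij
      constructor
      · intro hpos
        exfalso
        have hpos' : 0 < A i j ∨ 0 < A j i := by
          rcases hpos with h | h <;> [left; right] <;> linarith
        have hedge : A i j ≠ 0 ∨ A j i ≠ 0 := by
          rcases hpos' with h | h <;> [left; right] <;> exact ne_of_gt h
        rcases hcut i j hij hedge with h | hk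
        · exact hU h
        · have hneg := (mem_negset.mp (hK _ hk).1).2
          have hs := hss i j hne
          rcases hpos' with h | h <;> rcases hneg with h' | h' <;> nlinarith
      · rintro ⟨hneg, hnk⟩
        exfalso
        have hedge : A i j ≠ 0 ∨ A j i ≠ 0 := by
          rcases hneg with h | h <;> [left; right] <;> exact ne_of_lt h
        rcases hcut i j hij hedge with h | hk
        · exact hU h
        · exact hnk hk
  · simp [hij]

/-- The set `U` of vertices reachable from `b` after deleting edges `Ed`. -/
noncomputable def reachSet (G : SimpleGraph (Fin n)) (Ed : Set (Sym2 (Fin n)))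
    (b : Fin n) : Finset (Fin n) := by
  classical
  exact Finset.univ.filter (fun x => (G.deleteEdges Ed).Reachable b x)

lemma mem_reachSet {G : SimpleGraph (Fin n)} {Ed : Set (Sym2 (Fin n))} {b x : Fin n} :
    x ∈ reachSet G Ed b ↔ (G.deleteEdges Ed).Reachable b x := by
  classical
  simp [reachSet]

lemma reachSet_self {G : SimpleGraph (Fin n)} {Ed : Set (Sym2 (Fin n))} {b : Fin n} :
    b ∈ reachSet G Ed b := mem_reachSet.mpr (SimpleGraph.Reachable.refl b)

lemma reachSet_closed {G : SimpleGraph (Fin n)} {Ed : Set (Sym2 (Fin n))} {b x y : Fin n}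
    (hx : x ∈ reachSet G Ed b) (hxy : G.Adj x y) (hE : ¬ s(x, y) ∈ Ed) :
    y ∈ reachSet G Ed b := by
  rw [mem_reachSet] at hx ⊢
  exact hx.trans (SimpleGraph.Adj.reachable ((SimpleGraph.deleteEdges_adj).mpr ⟨hxy, hE⟩))

lemma reachSet_iff_of_notMem {G : SimpleGraph (Fin n)} {Ed : Set (Sym2 (Fin n))}
    {b x y : Fin n} (hxy : G.Adj x y) (hE : ¬ s(x, y) ∈ Ed) :
    (x ∈ reachSet G Ed b ↔ y ∈ reachSet G Ed b) := by
  constructor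
  · intro hx; exact reachSet_closed hx hxy hE
  · intro hy; exact reachSet_closed hy hxy.symm (by rwa [Sym2.eq_swap] at hE)

/-- If `U = reachSet` is closed under all `G`-steps, the deleted graph is connected. -/
lemma deleted_connected {G : SimpleGraph (Fin n)} {Ed : Set (Sym2 (Fin n))} {b : Fin n}
    (hconn : G.Connected)
    (hcl : ∀ x y : Fin n, x ∈ reachSet G Ed b → G.Adj x y → y ∈ reachSet G Ed b) :
    (G.deleteEdges Ed).Connected := by
  have hall : ∀ x : Fin n, x ∈ reachSet G Ed b := by
    intro x
    have hr : G.Reachable b x := hconn.preconnected b x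
    obtain ⟨w⟩ := hr
    have : ∀ (u v : Fin n) (_ : G.Walk u v), u ∈ reachSet G Ed b → v ∈ reachSet G Ed b := by
      intro u v w
      induction w with
      | nil => exact fun h => h
      | cons h q ih => intro hu; exact ih (hcl _ _ hu h)
    exact this b x w reachSet_self
  rw [SimpleGraph.connected_iff_exists_forall_reachable]
  exact ⟨b, fun x => mem_reachSet.mp (hall x)⟩

/-- A connected graph on `Fin n` has at least `n - 1` edges. -/
lemma connected_card_edges (G : SimpleGraph (Fin n)) (hconn : G.Connected) :
    n - 1 ≤ G.edgeSet.ncard := by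
  classical
  rcases Nat.eq_zero_or_pos n with hn | hn
  · simp [hn]
  obtain ⟨r⟩ : Nonempty (Fin n) := ⟨⟨0, hn⟩⟩
  have hex : ∀ v : Fin n, v ≠ r → ∃ u, G.Adj u v ∧ G.dist r u < G.dist r v := by
    intro v hv
    have hd : 0 < G.dist r v := hconn.pos_dist_of_ne (Ne.symm hv)
    obtain ⟨w, hw⟩ := hconn.exists_walk_length_eq_dist r v
    obtain ⟨u, hadj, q, hq⟩ := SimpleGraph.Walk.exists_eq_cons_of_ne hv w.reverse
    refine ⟨u, hadj.symm, ?_⟩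
    have hlen : q.length + 1 = w.length := by
      have := congrArg SimpleGraph.Walk.length hq
      simpa [Nat.add_comm] using this.symm
    have hle : G.dist r u ≤ q.reverse.length := SimpleGraph.dist_le _
    rw [SimpleGraph.Walk.length_reverse] at hle
    omega
  choose u hadj hlt using hex
  have hmaps : ∀ v ∈ Finset.univ.erase r,
      (if h : v = r then s(v, v) else s(u v h, v)) ∈ G.edgeFinset := by
    intro v hv
    have hvr : v ≠ r := (Finset.mem_erase.mp hv).1
    rw [dif_neg hvr]
    rw [SimpleGraph.mem_edgeFinset, SimpleGraph.mem_edgeSet]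
    exact hadj v hvr
  have hinj : Set.InjOn (fun v => if h : v = r then s(v, v) else s(u v h, v))
      ↑(Finset.univ.erase r) := by
    intro x hx y hy hxy
    have hxr : x ≠ r := (Finset.mem_erase.mp hx).1
    have hyr : y ≠ r := (Finset.mem_erase.mp hy).1
    simp only [dif_neg hxr, dif_neg hyr, Sym2.eq_iff] at hxy
    rcases hxy with ⟨_, h2⟩ | ⟨h1, h2⟩
    · exact h2
    · exfalso
      have l1 := hlt x hxr
      have l2 := hlt y hyr
      rw [h1] at l1; rw [← h2] at l2
      omega
  have hcard := Finset.card_le_card_of_injOn _ hmaps hinj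
  rw [Finset.card_erase_of_mem (Finset.mem_univ r), Finset.card_univ, Fintype.card_fin] at hcard
  rwa [Set.ncard_eq_toFinset_card']
  
lemma numNeighbors_eq_degree (A : Fin n → Fin n → ℝ) (v : Fin n)
    [Fintype ((infGraph A).neighborSet v)] :
    (infGraph A).degree v = numNeighbors A v := by
  classical
  have hset : (infGraph A).neighborFinset v =
      (Finset.univ.filter (fun j : Fin n => j ≠ v ∧ (A v j ≠ 0 ∨ A j v ≠ 0))) := by
    ext j
    simp only [SimpleGraph.mem_neighborFinset, Finset.mem_filter, Finset.mem_univ, true_and,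
      adj_iff]
    constructor
    · rintro ⟨hne, h⟩; exact ⟨Ne.symm hne, h⟩
    · rintro ⟨hne, h⟩; exact ⟨Ne.symm hne, h⟩
  rw [← SimpleGraph.card_neighborFinset_eq_degree, hset]
  unfold numNeighbors
  congr 1


lemma cut_parity (G : SimpleGraph (Fin n)) [DecidableRel G.Adj]
    (hdeg2 : ∀ v, G.degree v = 2)
    (a b c e : Fin n) (hne : s(a, b) ≠ s(c, e)) (hab : G.Adj a b) (hce : G.Adj c e)
    (U : Finset (Fin n))
    (hcl : ∀ x y : Fin n, x ∈ U → G.Adj x y →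
      ¬ s(x, y) ∈ ({s(a, b), s(c, e)} : Set (Sym2 (Fin n))) → y ∈ U) :
    Even ((if a ∈ U then 1 else 0) + (if b ∈ U then 1 else 0) +
      (if c ∈ U then 1 else 0) + (if e ∈ U then 1 else 0) : ℕ) := by
  classical
  set Ed : Set (Sym2 (Fin n)) := {s(a, b), s(c, e)} with hEd
  set X : Finset (Fin n × Fin n) :=
    Finset.univ.filter (fun z : Fin n × Fin n => z.1 ∈ U ∧ G.Adj z.1 z.2) with hXdef
  have hmemX : ∀ z : Fin n × Fin n, z ∈ X ↔ z.1 ∈ U ∧ G.Adj z.1 z.2 := by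
    intro z; simp [hXdef]
  -- total count of X
  have hXcard : X.card = 2 * U.card := by
    rw [Finset.card_eq_sum_card_fiberwise (f := Prod.fst) (t := U)
      (fun z hz => ((hmemX z).mp hz).1)]
    have h2 : ∀ v ∈ U, (X.filter (fun z => z.1 = v)).card = 2 := by
      intro v hv
      rw [← hdeg2 v, ← SimpleGraph.card_neighborFinset_eq_degree]
      apply Finset.card_bij (fun z _ => z.2)
      · intro z hz
        rw [Finset.mem_filter] at hz
        obtain ⟨hzX, hz1⟩ := hz
        rw [hmemX] at hzX
        rw [SimpleGraph.mem_neighborFinset, ← hz1]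
        exact hzX.2
      · intro z1 h1 z2 h2 h
        rw [Finset.mem_filter] at h1 h2
        exact Prod.ext (h1.2.trans h2.2.symm) h
      · intro y hy
        rw [SimpleGraph.mem_neighborFinset] at hy
        exact ⟨(v, y), Finset.mem_filter.mpr ⟨(hmemX _).mpr ⟨hv, hy⟩, rfl⟩, rfl⟩
    rw [Finset.sum_congr rfl h2, Finset.sum_const, smul_eq_mul, mul_comm]
  -- split into cut and non-cut pairs
  have hXsplit := Finset.card_filter_add_card_filter_not
    (s := X) (p := fun z : Fin n × Fin n => s(z.1, z.2) ∈ Ed)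
  set Xed := X.filter (fun z : Fin n × Fin n => s(z.1, z.2) ∈ Ed) with hXedDef
  set Xin := X.filter (fun z : Fin n × Fin n => ¬ s(z.1, z.2) ∈ Ed) with hXinDef
  -- swap stability of Xin
  have hswap : ∀ z : Fin n × Fin n, z ∈ Xin → (z.2, z.1) ∈ Xin := by
    rintro ⟨x, y⟩ hz
    rw [hXinDef, Finset.mem_filter, hmemX] at hz ⊢
    obtain ⟨⟨h1, h2⟩, h3⟩ := hz
    exact ⟨⟨hcl x y h1 h2 h3, h2.symm⟩, by rwa [Sym2.eq_swap]⟩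
  have hXinEven : Even Xin.card := by
    have hsplit2 := Finset.card_filter_add_card_filter_not
      (s := Xin) (p := fun z : Fin n × Fin n => z.1 < z.2)
    have hbij : (Xin.filter (fun z : Fin n × Fin n => z.1 < z.2)).card =
        (Xin.filter (fun z : Fin n × Fin n => ¬ z.1 < z.2)).card := by
      apply Finset.card_bij (fun z _ => (z.2, z.1))
      · intro z hz
        rw [Finset.mem_filter] at hz ⊢
        exact ⟨hswap z hz.1, not_lt.mpr hz.2.le⟩
      · intro z1 h1 z2 h2 h
        rw [Prod.mk.injEq] at h
        exact Prod.ext h.2 h.1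
      · rintro ⟨x, y⟩ hz
        rw [Finset.mem_filter] at hz
        obtain ⟨hzin, hnlt⟩ := hz
        have hady : G.Adj x y := by
          have := hzin
          rw [hXinDef, Finset.mem_filter, hmemX] at this
          exact this.1.2
        have hxy : y < x := lt_of_le_of_ne (not_lt.mp hnlt) (Ne.symm (hady.ne))
        exact ⟨(y, x), Finset.mem_filter.mpr ⟨hswap _ hzin, hxy⟩, rfl⟩
    refine ⟨(Xin.filter (fun z : Fin n × Fin n => z.1 < z.2)).card, ?_⟩
    omega
  -- the cut pairs, explicitly
  have hedS : Xed = ({(a, b), (b, a), (c, e), (e, c)} : Finset (Fin n × Fin n)).filter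
      (fun z => z.1 ∈ U) := by
    ext ⟨x, y⟩
    simp only [hXedDef, Finset.mem_filter, hmemX, hEd, Set.mem_insert_iff,
      Set.mem_singleton_iff, Sym2.eq_iff, Finset.mem_insert, Finset.mem_singleton,
      Prod.mk.injEq]
    constructor
    · rintro ⟨⟨h1, _⟩, (⟨rfl, rfl⟩ | ⟨rfl, rfl⟩) | (⟨rfl, rfl⟩ | ⟨rfl, rfl⟩)⟩ <;> tauto
    · rintro ⟨⟨h4, h5⟩ | ⟨h4, h5⟩ | ⟨h4, h5⟩ | ⟨h4, h5⟩, h1⟩ <;> subst h4 <;> subst h5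
      · exact ⟨⟨h1, hab⟩, Or.inl (Or.inl ⟨rfl, rfl⟩)⟩
      · exact ⟨⟨h1, hab.symm⟩, Or.inl (Or.inr ⟨rfl, rfl⟩)⟩
      · exact ⟨⟨h1, hce⟩, Or.inr (Or.inl ⟨rfl, rfl⟩)⟩
      · exact ⟨⟨h1, hce.symm⟩, Or.inr (Or.inr ⟨rfl, rfl⟩)⟩

  have hab' : a ≠ b := hab.ne
  have hce' : c ≠ e := hce.ne
  have hne1 : ¬ (a = c ∧ b = e) := fun h => hne (by rw [h.1, h.2])
  have hne2 : ¬ (a = e ∧ b = c) := fun h => hne (by rw [h.1, h.2]; exact Sym2.eq_swap)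
  have nm1 : ((a, b) : Fin n × Fin n) ∉
      ({(b, a), (c, e), (e, c)} : Finset (Fin n × Fin n)) := by
    simp only [Finset.mem_insert, Finset.mem_singleton, Prod.mk.injEq]
    rintro (⟨h1, h2⟩ | ⟨h1, h2⟩ | ⟨h1, h2⟩)
    exacts [hab' h1, hne1 ⟨h1, h2⟩, hne2 ⟨h1, h2⟩]
  have nm2 : ((b, a) : Fin n × Fin n) ∉
      ({(c, e), (e, c)} : Finset (Fin n × Fin n)) := by
    simp only [Finset.mem_insert, Finset.mem_singleton, Prod.mk.injEq]
    rintro (⟨h1, h2⟩ | ⟨h1, h2⟩)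
    exacts [hne2 ⟨h2, h1⟩, hne1 ⟨h2, h1⟩]
  have nm3 : ((c, e) : Fin n × Fin n) ∉ ({(e, c)} : Finset (Fin n × Fin n)) := by
    simp only [Finset.mem_singleton, Prod.mk.injEq]
    rintro ⟨h1, h2⟩
    exact hce' h1
  have hXedCard : Xed.card = (if a ∈ U then 1 else 0) + (if b ∈ U then 1 else 0) +
      (if c ∈ U then 1 else 0) + (if e ∈ U then 1 else 0) := by
    rw [hedS, Finset.card_filter, Finset.sum_insert nm1, Finset.sum_insert nm2,
      Finset.sum_insert nm3, Finset.sum_singleton]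
    show (if a ∈ U then 1 else 0) + ((if b ∈ U then 1 else 0) +
      ((if c ∈ U then 1 else 0) + (if e ∈ U then 1 else 0))) = _
    ring
  rw [← hXedCard]
  obtain ⟨t, ht⟩ := hXinEven
  exact ⟨U.card - t, by omega⟩

lemma switch_ne_zero {d : Fin n → ℝ} (hd : ∀ i, d i = 1 ∨ d i = -1) (i j : Fin n)
    (x : ℝ) : d i * d j * x ≠ 0 ↔ x ≠ 0 := by
  have hi : d i = 1 ∨ d i = -1 := hd i
  have hj : d j = 1 ∨ d j = -1 := hd j
  rcases hi with h | h <;> rcases hj with h' | h' <;> rw [h, h'] <;> norm_num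

lemma infGraph_switch (A : Fin n → Fin n → ℝ) {d : Fin n → ℝ}
    (hd : ∀ i, d i = 1 ∨ d i = -1) :
    infGraph (fun i j => d i * d j * A i j) = infGraph A := by
  ext i j
  rw [adj_iff, adj_iff, switch_ne_zero hd, switch_ne_zero hd]

lemma numNeighbors_switch (A : Fin n → Fin n → ℝ) {d : Fin n → ℝ}
    (hd : ∀ i, d i = 1 ∨ d i = -1) (v : Fin n) :
    numNeighbors (fun i j => d i * d j * A i j) v = numNeighbors A v := by
  classical
  unfold numNeighbors
  congr 1
  ext j
  rw [Finset.mem_filter, Finset.mem_filter, switch_ne_zero hd, switch_ne_zero hd]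

lemma hss_switch (A : Fin n → Fin n → ℝ)
    (hss : ∀ i j : Fin n, i ≠ j → 0 ≤ A i j * A j i) {d : Fin n → ℝ}
    (hd : ∀ i, d i = 1 ∨ d i = -1) :
    ∀ i j : Fin n, i ≠ j → 0 ≤ (d i * d j * A i j) * (d j * d i * A j i) := by
  intro i j hij
  have h : (d i * d j * A i j) * (d j * d i * A j i) =
      (d i * d i) * (d j * d j) * (A i j * A j i) := by ring
  rw [h]
  rcases hd i with hi | hi <;> rcases hd j with hj | hj <;> rw [hi, hj] <;>
    simpa using hss i j hij

lemma edge_ncard_le (A : Fin n → Fin n → ℝ) (hdeg : ∀ i, numNeighbors A i ≤ 2) :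
    (infGraph A).edgeSet.ncard ≤ n := by
  classical
  letI : DecidableRel (infGraph A).Adj := Classical.decRel _
  have hs := SimpleGraph.sum_degrees_eq_twice_card_edges (infGraph A)
  have hle : ∑ v : Fin n, (infGraph A).degree v ≤ ∑ _v : Fin n, 2 := by
    apply Finset.sum_le_sum
    intro v _
    rw [numNeighbors_eq_degree]
    exact hdeg v
  rw [Finset.sum_const, Finset.card_univ, Fintype.card_fin, smul_eq_mul] at hle
  rw [Set.ncard_eq_toFinset_card']
  have hrfl : (infGraph A).edgeSet.toFinset = (infGraph A).edgeFinset := rfl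
  rw [hrfl]
  omega


lemma pm_mul {x y : ℝ} (hx : x = 1 ∨ x = -1) (hy : y = 1 ∨ y = -1) :
    x * y = 1 ∨ x * y = -1 := by
  rcases hx with h | h <;> rcases hy with h' | h' <;> rw [h, h'] <;> norm_num

lemma sorted_pair_eq {i j a b : Fin n} (hij : i < j) (hab : a < b)
    (h : s(i, j) = s(a, b)) : (i, j) = (a, b) := by
  rw [Sym2.eq_iff] at h
  rcases h with ⟨h1, h2⟩ | ⟨h1, h2⟩
  · rw [h1, h2]
  · exfalso
    subst h1
    subst h2
    exact absurd (hab.trans hij) (lt_irrefl _)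

lemma bridge_flip (A : Fin n → Fin n → ℝ)
    (hss : ∀ i j : Fin n, i ≠ j → 0 ≤ A i j * A j i)
    (hconn : (infGraph A).Connected)
    (hE : (infGraph A).edgeSet.ncard < n)
    (p : Fin n × Fin n) (hp : p ∈ negset A) :
    ∃ d : Fin n → ℝ, (∀ i, d i = 1 ∨ d i = -1) ∧
      negset (fun i j => d i * d j * A i j) = negset A \ {p} := by
  classical
  obtain ⟨a, b⟩ := p
  rw [mem_negset] at hp
  obtain ⟨hab, hneg⟩ := hp
  have hedge : A a b ≠ 0 ∨ A b a ≠ 0 := by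
    rcases hneg with h | h <;> [left; right] <;> exact ne_of_lt h
  have hadj : (infGraph A).Adj a b := adj_iff.mpr ⟨ne_of_lt hab, hedge⟩
  set Ed : Set (Sym2 (Fin n)) := {s(a, b)} with hEd
  set U := reachSet (infGraph A) Ed b with hUdef
  have hbU : b ∈ U := reachSet_self
  have haU : a ∉ U := by
    intro ha
    have hcl : ∀ x y : Fin n, x ∈ U → (infGraph A).Adj x y → y ∈ U := by
      intro x y hx hxy
      by_cases hs : s(x, y) ∈ Ed
      · rw [hEd, Set.mem_singleton_iff, Sym2.eq_iff] at hs
        rcases hs with ⟨h1, h2⟩ | ⟨h1, h2⟩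
        · rw [h2]; exact hbU
        · rw [h2]; exact ha
      · exact reachSet_closed hx hxy hs
    have hdel := deleted_connected hconn hcl
    have hcount := connected_card_edges _ hdel
    rw [SimpleGraph.edgeSet_deleteEdges] at hcount
    have hsub : Ed ⊆ (infGraph A).edgeSet := by
      rw [hEd]
      intro z hz
      rw [Set.mem_singleton_iff] at hz
      rw [hz]
      exact (SimpleGraph.mem_edgeSet _).mpr hadj
    have hdiff : ((infGraph A).edgeSet \ Ed).ncard = (infGraph A).edgeSet.ncard - 1 := by
      rw [Set.ncard_diff hsub, hEd, Set.ncard_singleton]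
    have hge1 : 1 ≤ (infGraph A).edgeSet.ncard := by
      have : (infGraph A).edgeSet.Nonempty := ⟨s(a, b), (SimpleGraph.mem_edgeSet _).mpr hadj⟩
      have := (Set.ncard_pos (Set.toFinite _)).mpr this
      omega
    have hpos : 0 < n := b.pos
    omega
  have hK : ∀ r ∈ ({((a : Fin n), b)} : Finset (Fin n × Fin n)),
      (r ∈ negset A) ∧ ¬ (r.1 ∈ U ↔ r.2 ∈ U) := by
    intro r hr
    rw [Finset.mem_singleton] at hr
    subst hr
    exact ⟨mem_negset.mpr ⟨hab, hneg⟩, fun h => haU (h.mpr hbU)⟩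
  have hcut : ∀ i j : Fin n, i < j → (A i j ≠ 0 ∨ A j i ≠ 0) →
      (i ∈ U ↔ j ∈ U) ∨ (i, j) ∈ ({((a : Fin n), b)} : Finset (Fin n × Fin n)) := by
    intro i j hij hedg
    by_cases hs : s(i, j) ∈ Ed
    · right
      rw [hEd, Set.mem_singleton_iff] at hs
      exact Finset.mem_singleton.mpr (sorted_pair_eq hij hab hs)
    · left
      exact reachSet_iff_of_notMem (adj_iff.mpr ⟨ne_of_lt hij, hedg⟩) hs
  exact ⟨sg U, sg_pm U, negset_switch A hss U _ hK hcut⟩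

lemma reduce_two (A : Fin n → Fin n → ℝ)
    (hss : ∀ i j : Fin n, i ≠ j → 0 ≤ A i j * A j i)
    (hconn : (infGraph A).Connected)
    (hdeg : ∀ i, numNeighbors A i ≤ 2)
    (h2 : 2 ≤ zeta A) :
    ∃ d : Fin n → ℝ, (∀ i, d i = 1 ∨ d i = -1) ∧
      zeta (fun i j => d i * d j * A i j) + 2 = zeta A := by
  classical
  letI : DecidableRel (infGraph A).Adj := Classical.decRel _
  have hcard : 1 < (negset A).card := by rw [← zeta_eq]; omega
  obtain ⟨p, hp, q, hq, hpq⟩ := Finset.one_lt_card.mp hcard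
  obtain ⟨a, b⟩ := p
  obtain ⟨c, e⟩ := q
  rw [mem_negset] at hp hq
  obtain ⟨hab, hnegp⟩ := hp
  obtain ⟨hce, hnegq⟩ := hq
  have hedgep : A a b ≠ 0 ∨ A b a ≠ 0 := by
    rcases hnegp with h | h <;> [left; right] <;> exact ne_of_lt h
  have hedgeq : A c e ≠ 0 ∨ A e c ≠ 0 := by
    rcases hnegq with h | h <;> [left; right] <;> exact ne_of_lt h
  have hadjp : (infGraph A).Adj a b := adj_iff.mpr ⟨ne_of_lt hab, hedgep⟩
  have hadjq : (infGraph A).Adj c e := adj_iff.mpr ⟨ne_of_lt hce, hedgeq⟩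
  have hm1 : ((a, b) : Fin n × Fin n) ∈ negset A := mem_negset.mpr ⟨hab, hnegp⟩
  have hm2 : ((c, e) : Fin n × Fin n) ∈ negset A := mem_negset.mpr ⟨hce, hnegq⟩
  have h2' : 2 ≤ (negset A).card := by rw [← zeta_eq]; exact h2
  by_cases hEn : (infGraph A).edgeSet.ncard < n
  · -- bridge case: two successive single flips
    obtain ⟨d1, hd1, hneg1⟩ := bridge_flip A hss hconn hEn (a, b) hm1
    set A1 : Fin n → Fin n → ℝ := fun i j => d1 i * d1 j * A i j with hA1
    have hss1 : ∀ i j : Fin n, i ≠ j → 0 ≤ A1 i j * A1 j i := hss_switch A hss hd1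
    have hg1 : infGraph A1 = infGraph A := infGraph_switch A hd1
    have hconn1 : (infGraph A1).Connected := by rw [hg1]; exact hconn
    have hE1 : (infGraph A1).edgeSet.ncard < n := by rw [hg1]; exact hEn
    have hq1 : ((c, e) : Fin n × Fin n) ∈ negset A1 := by
      rw [hneg1, Finset.mem_sdiff, Finset.mem_singleton]
      exact ⟨hm2, fun h => hpq (by rw [h])⟩
    obtain ⟨d2, hd2, hneg2⟩ := bridge_flip A1 hss1 hconn1 hE1 (c, e) hq1
    refine ⟨fun i => d2 i * d1 i, fun i => pm_mul (hd2 i) (hd1 i), ?_⟩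
    · have hfun : (fun i j => (d2 i * d1 i) * (d2 j * d1 j) * A i j)
          = fun i j => d2 i * d2 j * A1 i j := by
        funext i j
        simp only [hA1]
        ring
      show zeta (fun i j => (d2 i * d1 i) * (d2 j * d1 j) * A i j) + 2 = zeta A
      rw [hfun, zeta_eq, hneg2, hneg1, zeta_eq A]
      have hs2 : ((c, e) : Fin n × Fin n) ∈ negset A \ {((a : Fin n), b)} := by
        rw [Finset.mem_sdiff, Finset.mem_singleton]
        exact ⟨hm2, fun h => hpq (by rw [h])⟩
      rw [Finset.card_sdiff_of_subset (Finset.singleton_subset_iff.mpr hs2),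
        Finset.card_sdiff_of_subset (Finset.singleton_subset_iff.mpr hm1),
        Finset.card_singleton, Finset.card_singleton]
      omega
  · -- cycle case
    push_neg at hEn
    have hEn' : (infGraph A).edgeSet.ncard = n := le_antisymm (edge_ncard_le A hdeg) hEn
    have hdeg2 : ∀ v, (infGraph A).degree v = 2 := by
      by_contra hvx
      push_neg at hvx
      obtain ⟨v, hv⟩ := hvx
      have hlt : (infGraph A).degree v < 2 :=
        lt_of_le_of_ne (by rw [numNeighbors_eq_degree]; exact hdeg v) hv
      have hsum := SimpleGraph.sum_degrees_eq_twice_card_edges (infGraph A)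
      have hslt : ∑ w : Fin n, (infGraph A).degree w < ∑ _w : Fin n, 2 :=
        Finset.sum_lt_sum (fun i _ => by rw [numNeighbors_eq_degree]; exact hdeg i)
          ⟨v, Finset.mem_univ v, hlt⟩
      rw [Finset.sum_const, Finset.card_univ, Fintype.card_fin, smul_eq_mul] at hslt
      have hrfl : (infGraph A).edgeSet.toFinset = (infGraph A).edgeFinset := rfl
      rw [Set.ncard_eq_toFinset_card', hrfl] at hEn'
      omega
    have hsne : s(a, b) ≠ s(c, e) := fun h => hpq (sorted_pair_eq hab hce h)
    set Ed : Set (Sym2 (Fin n)) := {s(a, b), s(c, e)} with hEd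
    set U := reachSet (infGraph A) Ed b with hUdef
    have hbU : b ∈ U := reachSet_self
    have hcl0 : ∀ x y : Fin n, x ∈ U → (infGraph A).Adj x y → ¬ s(x, y) ∈ Ed → y ∈ U :=
      fun x y hx hxy hs => reachSet_closed hx hxy hs
    have hparity := cut_parity (infGraph A) hdeg2 a b c e hsne hadjp hadjq U hcl0
    have hconn_del : (∀ x y : Fin n, x ∈ U → (infGraph A).Adj x y → y ∈ U) → False := by
      intro hcl
      have hdel := deleted_connected hconn hcl
      have hcount := connected_card_edges _ hdel
      rw [SimpleGraph.edgeSet_deleteEdges] at hcount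
      have hsub : Ed ⊆ (infGraph A).edgeSet := by
        rw [hEd]
        intro z hz
        rcases Set.mem_insert_iff.mp hz with hz | hz
        · rw [hz]; exact (SimpleGraph.mem_edgeSet _).mpr hadjp
        · rw [Set.mem_singleton_iff] at hz
          rw [hz]; exact (SimpleGraph.mem_edgeSet _).mpr hadjq
      have hEd2 : Ed.ncard = 2 := by rw [hEd]; exact Set.ncard_pair hsne
      have hdiff := Set.ncard_diff hsub
      rw [hEd2] at hdiff
      have hpos : 0 < n := b.pos
      omega
    have haU : a ∉ U := by
      intro ha
      have hcde : (c ∈ U ↔ e ∈ U) := by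
        by_cases hc : c ∈ U <;> by_cases he : e ∈ U
        · exact iff_of_true hc he
        · exfalso
          obtain ⟨t, ht⟩ := hparity
          simp only [ha, hbU, hc, he, if_true, if_false] at ht
          omega
        · exfalso
          obtain ⟨t, ht⟩ := hparity
          simp only [ha, hbU, hc, he, if_true, if_false] at ht
          omega
        · exact iff_of_false hc he
      apply hconn_del
      intro x y hx hxy
      by_cases hs : s(x, y) ∈ Ed
      · rw [hEd] at hs
        rcases Set.mem_insert_iff.mp hs with hs | hs
        · rw [Sym2.eq_iff] at hs
          rcases hs with ⟨h1, h2⟩ | ⟨h1, h2⟩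
          · rw [h2]; exact hbU
          · rw [h2]; exact ha
        · rw [Set.mem_singleton_iff, Sym2.eq_iff] at hs
          rcases hs with ⟨h1, h2⟩ | ⟨h1, h2⟩
          · rw [h2]; exact hcde.mp (by rw [← h1]; exact hx)
          · rw [h2]; exact hcde.mpr (by rw [← h1]; exact hx)
      · exact hcl0 x y hx hxy hs
    have hceU : ¬ (c ∈ U ↔ e ∈ U) := by
      intro hiff
      by_cases hc : c ∈ U
      · have he : e ∈ U := hiff.mp hc
        obtain ⟨t, ht⟩ := hparity
        simp only [haU, hbU, hc, he, if_true, if_false] at ht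
        omega
      · have he : e ∉ U := fun he => hc (hiff.mpr he)
        obtain ⟨t, ht⟩ := hparity
        simp only [haU, hbU, hc, he, if_true, if_false] at ht
        omega
    have hKK : ∀ r ∈ ({((a : Fin n), b), (c, e)} : Finset (Fin n × Fin n)),
        (r ∈ negset A) ∧ ¬ (r.1 ∈ U ↔ r.2 ∈ U) := by
      intro r hr
      rcases Finset.mem_insert.mp hr with hr | hr
      · subst hr
        exact ⟨hm1, fun h => haU (h.mpr hbU)⟩
      · rw [Finset.mem_singleton] at hr
        subst hr
        exact ⟨hm2, hceU⟩
    have hcut : ∀ i j : Fin n, i < j → (A i j ≠ 0 ∨ A j i ≠ 0) →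
        (i ∈ U ↔ j ∈ U) ∨ (i, j) ∈ ({((a : Fin n), b), (c, e)} : Finset (Fin n × Fin n)) := by
      intro i j hij hedg
      by_cases hs : s(i, j) ∈ Ed
      · right
        rw [hEd] at hs
        rcases Set.mem_insert_iff.mp hs with hs | hs
        · exact Finset.mem_insert.mpr (Or.inl (sorted_pair_eq hij hab hs))
        · rw [Set.mem_singleton_iff] at hs
          exact Finset.mem_insert.mpr
            (Or.inr (Finset.mem_singleton.mpr (sorted_pair_eq hij hce hs)))
      · left
        exact reachSet_iff_of_notMem (adj_iff.mpr ⟨ne_of_lt hij, hedg⟩) hs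
    have hsw := negset_switch A hss U _ hKK hcut
    refine ⟨sg U, sg_pm U, ?_⟩
    rw [zeta_eq, hsw, zeta_eq A]
    have hKsub : ({((a : Fin n), b), (c, e)} : Finset (Fin n × Fin n)) ⊆ negset A := by
      intro r hr
      exact (hKK r hr).1
    rw [Finset.card_sdiff_of_subset hKsub]
    have hKcard : ({((a : Fin n), b), (c, e)} : Finset (Fin n × Fin n)).card = 2 := by
      rw [Finset.card_insert_of_notMem (by simpa using hpq), Finset.card_singleton]
    rw [hKcard]
    omega

end Stmt16

/-- If `A` is sign-symmetric with connected influence graph, every vertex has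
at most two neighbors, and `ζ(A)` is odd, then there is a signature matrix `S`
with `ζ(SAS) = 1`. -/
theorem stmt16 (n : ℕ) (A : Fin n → Fin n → ℝ)
    (hss : ∀ i j : Fin n, i ≠ j → 0 ≤ A i j * A j i)
    (hconn : (infGraph A).Connected)
    (hdeg : ∀ i, numNeighbors A i ≤ 2)
    (hz : Odd (zeta A)) :
    ∃ d : Fin n → ℝ, (∀ i, d i = 1 ∨ d i = -1) ∧
      zeta (fun i j => d i * d j * A i j) = 1 := by
  classical
  suffices h : ∀ k : ℕ, ∀ B : Fin n → Fin n → ℝ,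
      (∀ i j : Fin n, i ≠ j → 0 ≤ B i j * B j i) → (infGraph B).Connected →
      (∀ i, numNeighbors B i ≤ 2) → zeta B = k → Odd k →
      ∃ d : Fin n → ℝ, (∀ i, d i = 1 ∨ d i = -1) ∧
        zeta (fun i j => d i * d j * B i j) = 1 by
    exact h (zeta A) A hss hconn hdeg rfl hz
  intro k
  induction k using Nat.strong_induction_on with
  | _ k ih =>
    intro B hssB hconnB hdegB hkB hodd
    by_cases h1 : k = 1
    · subst h1
      refine ⟨fun _ => 1, fun i => Or.inl rfl, ?_⟩
      simpa using hkB
    · have h2 : 2 ≤ zeta B := by obtain ⟨m, hm⟩ := hodd; omega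
      obtain ⟨d1, hd1, hz1⟩ := Stmt16.reduce_two B hssB hconnB hdegB h2
      set B1 : Fin n → Fin n → ℝ := fun i j => d1 i * d1 j * B i j with hB1
      have hk1 : zeta B1 = k - 2 := by omega
      have hodd1 : Odd (k - 2) := by obtain ⟨m, hm⟩ := hodd; exact ⟨m - 1, by omega⟩
      have hlt : k - 2 < k := by omega
      obtain ⟨d2, hd2, hz2⟩ := ih (k - 2) hlt B1 (Stmt16.hss_switch B hssB hd1)
        (by rw [Stmt16.infGraph_switch B hd1]; exact hconnB)
        (fun i => by rw [Stmt16.numNeighbors_switch B hd1]; exact hdegB i) hk1 hodd1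
      refine ⟨fun i => d2 i * d1 i, fun i => Stmt16.pm_mul (hd2 i) (hd1 i), ?_⟩
      · have hfun : (fun i j => (d2 i * d1 i) * (d2 j * d1 j) * B i j)
            = fun i j => d2 i * d2 j * B1 i j := by
          funext i j
          simp only [hB1]
          ring
        show zeta (fun i j => (d2 i * d1 i) * (d2 j * d1 j) * B i j) = 1
        rw [hfun]
        exact hz2
end
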